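/- arXiv:2302.06835 — 2 statements merged into one kernel-verified Lean document; each statement's English description precedes it below -/
import Mathlib

section
/- Let G be a finite simple connected graph on n vertices with Laplacian L, and let u ≠ v be vertices with {u,v} not an edge of G. Let G' = G ∪ {u,v} be the graph obtained by adding the edge {u,v}, whose Laplacian is L' = L + (1_u − 1_v)(1_u − 1_v)ᵀ. Then R_tot(G) − R_tot(G') = n · B²_{u,v} / (1 + R_{u,v}), where R_{u,v}, B²_{u,v}, and R_tot(G) are computed from L and R_tot(G') is computed from L'. -/
open Matrix Finset

/-- The effective resistance `R_{u,v} = (1_u − 1_v)ᵀ (L + (1/n)J)⁻¹ (1_u − 1_v)` computed from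
a Laplacian matrix `L` (here `J = 11ᵀ` is the all-ones matrix and `n` the number of vertices). -/
noncomputable def resOf {V : Type*} [Fintype V] [DecidableEq V] (L : Matrix V V ℝ) (u v : V) :
    ℝ :=
  (Pi.single u 1 - Pi.single v 1) ⬝ᵥ
    ((L + ((Fintype.card V : ℝ))⁻¹ • Matrix.of (fun _ _ : V => (1 : ℝ)))⁻¹ *ᵥ
      (Pi.single u 1 - Pi.single v 1))

/-- The squared biharmonic distance `B²_{u,v} = (1_u − 1_v)ᵀ (L + (1/n)J)⁻² (1_u − 1_v)`
computed from a Laplacian matrix `L`. -/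
noncomputable def bihSqOf {V : Type*} [Fintype V] [DecidableEq V] (L : Matrix V V ℝ) (u v : V) :
    ℝ :=
  (Pi.single u 1 - Pi.single v 1) ⬝ᵥ
    (((L + ((Fintype.card V : ℝ))⁻¹ • Matrix.of (fun _ _ : V => (1 : ℝ)))⁻¹ *
        (L + ((Fintype.card V : ℝ))⁻¹ • Matrix.of (fun _ _ : V => (1 : ℝ)))⁻¹) *ᵥ
      (Pi.single u 1 - Pi.single v 1))

/-- The total resistance computed from a Laplacian matrix `L`: the sum of `R_{u,v}` over
unordered pairs of distinct vertices, i.e. half the sum over ordered pairs. -/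
noncomputable def totResOf {V : Type*} [Fintype V] [DecidableEq V] (L : Matrix V V ℝ) : ℝ :=
  (∑ p ∈ Finset.univ.offDiag, resOf L p.1 p.2) / 2

/-!
With `M = L + J/n` and `x = M⁻¹ (1_u − 1_v)`, the Sherman–Morrison formula gives
`(M + (1_u − 1_v)(1_u − 1_v)ᵀ)⁻¹ = M⁻¹ − x xᵀ / (1 + R_{u,v})`, so every resistance `R_{p,q}`
drops by `(x_p − x_q)² / (1 + R_{u,v})`. Summed over pairs these drops give `n ‖x‖² − (∑ x)²`
over `1 + R_{u,v}`; here `‖x‖² = B²_{u,v}`, and `∑ x = ∑ (1_u − 1_v) = 0` because the symmetric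
matrix `M` fixes the constant vector.
-/

theorem Finset.sum_offDiag_sub_sq {ι R : Type*} [Fintype ι] [DecidableEq ι] [CommRing R]
    (x : ι → R) :
    ∑ p ∈ univ.offDiag, (x p.1 - x p.2) ^ 2 =
      2 * (Fintype.card ι * ∑ i, x i ^ 2 - (∑ i, x i) ^ 2) := by
  have hdiag : ∑ p ∈ (univ : Finset ι).diag, (x p.1 - x p.2) ^ 2 = 0 :=
    sum_eq_zero fun p hp => by rw [(mem_diag.1 hp).2, sub_self, sq, mul_zero]
  rw [← zero_add (∑ p ∈ univ.offDiag, _), ← hdiag, ← sum_union (disjoint_diag_offDiag _),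
    diag_union_offDiag, sum_product]
  simp only [sub_sq, sum_add_distrib, sum_sub_distrib, sum_const, card_univ, nsmul_eq_mul,
    ← mul_sum, ← sum_mul]
  ring

namespace Matrix

variable {n K : Type*} [Fintype n] [Field K]

theorem inv_add_vecMulVec [DecidableEq n] {M : Matrix n n K} (hM : IsUnit M) (a b : n → K)
    (h : 1 + b ⬝ᵥ (M⁻¹ *ᵥ a) ≠ 0) :
    (M + vecMulVec a b)⁻¹ =
      M⁻¹ - (1 + b ⬝ᵥ (M⁻¹ *ᵥ a))⁻¹ • vecMulVec (M⁻¹ *ᵥ a) (b ᵥ* M⁻¹) := by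
  have hMM : M * M⁻¹ = 1 := mul_nonsing_inv M ((isUnit_iff_isUnit_det M).1 hM)
  apply inv_eq_right_inv
  rw [add_mul, mul_sub, mul_sub, hMM, Matrix.mul_smul, Matrix.mul_smul, mul_vecMulVec,
    mulVec_mulVec, hMM, one_mulVec, vecMulVec_mul, vecMulVec_mul_vecMulVec, vecMulVec_smul,
    smul_smul]
  have hcoef :
      (1 + b ⬝ᵥ (M⁻¹ *ᵥ a))⁻¹ * (b ⬝ᵥ (M⁻¹ *ᵥ a)) = 1 - (1 + b ⬝ᵥ (M⁻¹ *ᵥ a))⁻¹ := by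
    field_simp; ring
  rw [hcoef]
  module

theorem single_sub_single_dotProduct_vecMulVec_mulVec [DecidableEq n] (x : n → K) (p q : n) :
    (Pi.single p 1 - Pi.single q 1) ⬝ᵥ (vecMulVec x x *ᵥ (Pi.single p 1 - Pi.single q 1)) =
      (x p - x q) ^ 2 := by
  simp [vecMulVec_mulVec, dotProduct_sub, sub_dotProduct, sq]

theorem IsSymm.dotProduct_mul_self_mulVec {A : Matrix n n K} (hA : A.IsSymm) (w : n → K) :
    w ⬝ᵥ ((A * A) *ᵥ w) = (A *ᵥ w) ⬝ᵥ (A *ᵥ w) := by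
  rw [← mulVec_mulVec, dotProduct_mulVec, ← mulVec_transpose, hA.eq]

end Matrix

section Resistance

variable {V : Type*} [Fintype V]

noncomputable def shiftedLap (L : Matrix V V ℝ) : Matrix V V ℝ :=
  L + ((Fintype.card V : ℝ))⁻¹ • Matrix.of (fun _ _ : V => (1 : ℝ))

/-- The vertex potentials for the current injection `w`, normalised to mean zero when
`∑ i, w i = 0`. -/
noncomputable def potential [DecidableEq V] (L : Matrix V V ℝ) (w : V → ℝ) : V → ℝ :=
  (shiftedLap L)⁻¹ *ᵥ w

theorem dotProduct_shiftedLap_mulVec (L : Matrix V V ℝ) (x : V → ℝ) :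
    x ⬝ᵥ (shiftedLap L *ᵥ x) = x ⬝ᵥ (L *ᵥ x) + (Fintype.card V : ℝ)⁻¹ * (∑ i, x i) ^ 2 := by
  have hJ : x ⬝ᵥ (Matrix.of (fun _ _ : V => (1 : ℝ)) *ᵥ x) = (∑ i, x i) ^ 2 := by
    simp [mulVec, dotProduct, sq, ← sum_mul]
  rw [shiftedLap, add_mulVec, dotProduct_add, smul_mulVec, dotProduct_smul, smul_eq_mul, hJ]

theorem resOf_eq_dotProduct_potential [DecidableEq V] (L : Matrix V V ℝ) (u v : V) :
    resOf L u v =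
      (Pi.single u 1 - Pi.single v 1) ⬝ᵥ potential L (Pi.single u 1 - Pi.single v 1) :=
  rfl

theorem resOf_add_vecMulVec_self [DecidableEq V] {L : Matrix V V ℝ} (hM : (shiftedLap L).PosDef)
    (w : V → ℝ) (p q : V) :
    resOf (L + vecMulVec w w) p q =
      resOf L p q - (potential L w p - potential L w q) ^ 2 / (1 + w ⬝ᵥ potential L w) := by
  have hx : (shiftedLap L)⁻¹ *ᵥ w = potential L w := rfl
  have hα : 0 ≤ w ⬝ᵥ potential L w := by
    simpa [potential] using hM.inv.posSemidef.dotProduct_mulVec_nonneg w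
  have hsymm : w ᵥ* (shiftedLap L)⁻¹ = potential L w := by
    rw [← mulVec_transpose, (isHermitian_iff_isSymm.1 hM.isHermitian).inv.eq]; rfl
  have hshift : shiftedLap (L + vecMulVec w w) = shiftedLap L + vecMulVec w w :=
    add_right_comm _ _ _
  rw [resOf_eq_dotProduct_potential, resOf_eq_dotProduct_potential, potential, hshift,
    inv_add_vecMulVec hM.isUnit w w (by positivity), hsymm, sub_mulVec, smul_mulVec,
    dotProduct_sub, dotProduct_smul, hx, single_sub_single_dotProduct_vecMulVec_mulVec,
    smul_eq_mul, div_eq_inv_mul]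
  rfl

theorem totResOf_sub_totResOf_add_vecMulVec_self [DecidableEq V] {L : Matrix V V ℝ}
    (hM : (shiftedLap L).PosDef) (w : V → ℝ) :
    totResOf L - totResOf (L + vecMulVec w w) =
      (Fintype.card V * (potential L w ⬝ᵥ potential L w) - (∑ i, potential L w i) ^ 2) /
        (1 + w ⬝ᵥ potential L w) := by
  simp only [totResOf, div_sub_div_same, ← sum_sub_distrib, resOf_add_vecMulVec_self hM,
    sub_sub_cancel, ← sum_div, sum_offDiag_sub_sq]
  have hdot : potential L w ⬝ᵥ potential L w = ∑ i, potential L w i ^ 2 := by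
    simp [dotProduct, sq]
  rw [hdot]
  ring

theorem bihSqOf_eq_dotProduct_potential [DecidableEq V] {L : Matrix V V ℝ}
    (hM : (shiftedLap L).IsSymm) (u v : V) :
    bihSqOf L u v =
      potential L (Pi.single u 1 - Pi.single v 1) ⬝ᵥ potential L (Pi.single u 1 - Pi.single v 1) :=
  hM.inv.dotProduct_mul_self_mulVec _

end Resistance

namespace SimpleGraph

variable {V : Type*} [Fintype V] [DecidableEq V] (G : SimpleGraph V) [DecidableRel G.Adj]

theorem isSymm_shiftedLap_lapMatrix : (shiftedLap (G.lapMatrix ℝ)).IsSymm :=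
  (G.isSymm_lapMatrix (R := ℝ)).add ((IsSymm.ext fun _ _ => rfl).smul _)

theorem posDef_shiftedLap_lapMatrix (hconn : G.Connected) :
    (shiftedLap (G.lapMatrix ℝ)).PosDef := by
  have hn : (0 : ℝ) < Fintype.card V := by
    have := hconn.nonempty
    exact_mod_cast Fintype.card_pos
  refine PosDef.of_dotProduct_mulVec_pos
    (isHermitian_iff_isSymm.2 G.isSymm_shiftedLap_lapMatrix) fun x hx => ?_
  rw [star_trivial, dotProduct_shiftedLap_mulVec]
  have hL : 0 ≤ x ⬝ᵥ (G.lapMatrix ℝ *ᵥ x) := by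
    simpa using (G.posSemidef_lapMatrix ℝ).dotProduct_mulVec_nonneg x
  by_contra! hle
  have hJ : 0 ≤ (Fintype.card V : ℝ)⁻¹ * (∑ i, x i) ^ 2 := by positivity
  have hLx : x ⬝ᵥ (G.lapMatrix ℝ *ᵥ x) = 0 := by linarith
  have hsum : ∑ i, x i = 0 := by
    have : (Fintype.card V : ℝ)⁻¹ * (∑ i, x i) ^ 2 = 0 := by linarith
    simpa [hn.ne'] using this
  have hconst : ∀ i j, x i = x j := fun i j =>
    (G.lapMatrix_toLinearMap₂'_apply'_eq_zero_iff_forall_reachable x).1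
      (by rwa [toLinearMap₂'_apply']) i j (hconn.preconnected i j)
  refine hx (funext fun i => ?_)
  have : (Fintype.card V : ℝ) * x i = 0 := by
    rw [← hsum, Finset.sum_congr rfl fun j _ => hconst j i]
    simp
  simpa [hn.ne'] using this

theorem shiftedLap_lapMatrix_mulVec_one [Nonempty V] :
    shiftedLap (G.lapMatrix ℝ) *ᵥ (fun _ => 1) = fun _ => 1 := by
  rw [shiftedLap, add_mulVec, lapMatrix_mulVec_const_eq_zero, zero_add, smul_mulVec]
  ext i
  simp [mulVec, dotProduct]

theorem sum_potential_lapMatrix (hconn : G.Connected) (w : V → ℝ) :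
    ∑ i, potential (G.lapMatrix ℝ) w i = ∑ i, w i := by
  have := hconn.nonempty
  have hw : shiftedLap (G.lapMatrix ℝ) *ᵥ potential (G.lapMatrix ℝ) w = w := by
    rw [potential, mulVec_mulVec, mul_nonsing_inv _ ((isUnit_iff_isUnit_det _).1
      (G.posDef_shiftedLap_lapMatrix hconn).isUnit), one_mulVec]
  calc ∑ i, potential (G.lapMatrix ℝ) w i
      = (fun _ => 1) ⬝ᵥ potential (G.lapMatrix ℝ) w := by simp [dotProduct]
    _ = (shiftedLap (G.lapMatrix ℝ) *ᵥ fun _ => 1) ⬝ᵥ potential (G.lapMatrix ℝ) w := by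
      rw [G.shiftedLap_lapMatrix_mulVec_one]
    _ = (fun _ => 1) ⬝ᵥ w := by
      rw [← vecMul_transpose, G.isSymm_shiftedLap_lapMatrix.eq, ← dotProduct_mulVec, hw]
    _ = ∑ i, w i := by simp [dotProduct]

end SimpleGraph

theorem change_in_total_resistance_general {V : Type*} [Fintype V] [DecidableEq V]
    (G : SimpleGraph V) [DecidableRel G.Adj]
    (hconn : G.Connected)
    (u v : V) :
    totResOf (G.lapMatrix ℝ) -
        totResOf (G.lapMatrix ℝ +
          Matrix.vecMulVec (Pi.single u 1 - Pi.single v 1) (Pi.single u 1 - Pi.single v 1)) =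
      (Fintype.card V : ℝ) * bihSqOf (G.lapMatrix ℝ) u v / (1 + resOf (G.lapMatrix ℝ) u v) := by
  have hsum : ∑ i, (Pi.single u 1 - Pi.single v 1 : V → ℝ) i = 0 := by
    simp [sum_sub_distrib]
  rw [totResOf_sub_totResOf_add_vecMulVec_self (G.posDef_shiftedLap_lapMatrix hconn),
    G.sum_potential_lapMatrix hconn, hsum,
    bihSqOf_eq_dotProduct_potential G.isSymm_shiftedLap_lapMatrix, resOf_eq_dotProduct_potential,
    zero_pow two_ne_zero, sub_zero]

/-- if `G` is a finite simple connected graph with Laplacian `L`, `u ≠ v` are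
vertices with `{u,v}` not an edge of `G`, and `L' = L + (1_u − 1_v)(1_u − 1_v)ᵀ` is the
Laplacian of the graph `G ∪ {u,v}`, then
`R_tot(G) − R_tot(G ∪ {u,v}) = n · B²_{u,v} / (1 + R_{u,v})`. -/
theorem change_in_total_resistance {V : Type*} [Fintype V] [DecidableEq V]
    (G : SimpleGraph V) [DecidableRel G.Adj]
    (hconn : G.Connected) (hcard : 2 ≤ Fintype.card V)
    (u v : V) (huv : u ≠ v) (hne : ¬ G.Adj u v) :
    totResOf (G.lapMatrix ℝ) -
        totResOf (G.lapMatrix ℝ +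
          Matrix.vecMulVec (Pi.single u 1 - Pi.single v 1) (Pi.single u 1 - Pi.single v 1)) =
      (Fintype.card V : ℝ) * bihSqOf (G.lapMatrix ℝ) u v / (1 + resOf (G.lapMatrix ℝ) u v) :=
  change_in_total_resistance_general G hconn u v
end

section
/- Let G be a finite simple connected non-bipartite graph and let u, v be vertices. Then the series Σ_{i=0}^{∞} ( (1/d_u)(Â^i)_{uu} + (1/d_v)(Â^i)_{vv} − (2/√(d_u d_v))(Â^i)_{uv} ) converges and equals the effective resistance R_{u,v}. -/
open Matrix Finset

/-- The normalized adjacency matrix `Â = D^{-1/2} A D^{-1/2}` of a graph. -/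
noncomputable def nadj {V : Type*} [Fintype V] [DecidableEq V] (G : SimpleGraph V)
    [DecidableRel G.Adj] : Matrix V V ℝ :=
  Matrix.diagonal (fun v => (Real.sqrt (G.degree v))⁻¹) * G.adjMatrix ℝ *
    Matrix.diagonal (fun v => (Real.sqrt (G.degree v))⁻¹)

/-- The effective resistance `R_{u,v} = (1_u − 1_v)ᵀ (L + (1/n)J)⁻¹ (1_u − 1_v)`. -/
noncomputable def effRes {V : Type*} [Fintype V] [DecidableEq V] (G : SimpleGraph V)
    [DecidableRel G.Adj] (u v : V) : ℝ :=
  (Pi.single u 1 - Pi.single v 1) ⬝ᵥ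
    ((G.lapMatrix ℝ + ((Fintype.card V : ℝ))⁻¹ • Matrix.of (fun _ _ : V => (1 : ℝ)))⁻¹ *ᵥ
      (Pi.single u 1 - Pi.single v 1))

/-!
Let `y = 1_u - 1_v` and `x = D^{-1/2} y`, so that the `i`-th summand is `xᵀ Âⁱ x`. Since
`I - Â = D^{-1/2} L D^{-1/2}` and `I + Â = D^{-1/2} (D + A) D^{-1/2}`, where the signless Laplacian
`D + A` of a connected non-bipartite graph is positive definite, the eigenvalues of `Â` lie in
`(-1, 1]`. The vector `w = (L + J/n)⁻¹ y` has zero sum, so `L w = y`, i.e. `x = (I - Â) z` with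
`z = D^{1/2} w`. In an eigenbasis of `Â` the component of `xᵀ Âⁱ x` at an eigenvalue `μ` is
`(1 - μ)² z_μ² μⁱ`: zero for `μ = 1`, and otherwise a convergent geometric series with sum
`(1 - μ) z_μ²`. Summing over the eigenbasis gives `xᵀ z = yᵀ w = R_{u,v}`.
-/

theorem hasSum_pow_mul_mul_self {μ c d : ℝ} (hμ : -1 < μ) (hμ' : μ ≤ 1) (hc : c = (1 - μ) * d) :
    HasSum (fun i : ℕ => μ ^ i * (c * c)) (c * d) := by
  rcases hμ'.eq_or_lt with rfl | hlt
  · simp [hc]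
  · rw [show c * d = (1 - μ)⁻¹ * (c * c) by rw [hc]; field_simp [(sub_pos.2 hlt).ne']]
    exact (hasSum_geometric_of_abs_lt_one (abs_lt.2 ⟨hμ, hlt⟩)).mul_right _

theorem Matrix.IsSymm.single_sub_single_dotProduct_mulVec {n R : Type*} [Fintype n]
    [DecidableEq n] [CommRing R] {P : Matrix n n R} (hP : P.IsSymm) (u v : n) (a b : R) :
    (Pi.single u a - Pi.single v b) ⬝ᵥ (P *ᵥ (Pi.single u a - Pi.single v b)) =
      a ^ 2 * P u u + b ^ 2 * P v v - 2 * a * b * P u v := by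
  simp only [mulVec_sub, dotProduct_sub, sub_dotProduct, mulVec_single, single_dotProduct,
    Pi.smul_apply, op_smul_eq_mul, col_apply, hP.apply v u]
  ring

namespace Matrix.IsHermitian

variable {n : Type*} [Fintype n] [DecidableEq n] {A : Matrix n n ℝ} (hA : A.IsHermitian)

theorem star_eigenvectorUnitary_mulVec_apply (w : n → ℝ) (j : n) :
    (star (hA.eigenvectorUnitary : Matrix n n ℝ) *ᵥ w) j = ⇑(hA.eigenvectorBasis j) ⬝ᵥ w := by
  simp [mulVec, dotProduct]

theorem dotProduct_pow_mulVec (i : ℕ) (x y : n → ℝ) :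
    x ⬝ᵥ (A ^ i *ᵥ y) = ∑ j, hA.eigenvalues j ^ i *
      ((⇑(hA.eigenvectorBasis j) ⬝ᵥ x) * (⇑(hA.eigenvectorBasis j) ⬝ᵥ y)) := by
  have hpow : A ^ i = (hA.eigenvectorUnitary : Matrix n n ℝ) *
      diagonal (fun j => hA.eigenvalues j ^ i) * star (hA.eigenvectorUnitary : Matrix n n ℝ) := by
    conv_lhs => rw [hA.spectral_theorem]
    rw [← map_pow, Unitary.conjStarAlgAut_apply, diagonal_pow]
    rfl
  have hx : x ᵥ* (hA.eigenvectorUnitary : Matrix n n ℝ) =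
      star (hA.eigenvectorUnitary : Matrix n n ℝ) *ᵥ x := by
    rw [star_eq_conjTranspose, conjTranspose_eq_transpose_of_trivial, mulVec_transpose]
  rw [hpow, ← mulVec_mulVec, ← mulVec_mulVec, dotProduct_mulVec, hx]
  simp only [dotProduct, mulVec_diagonal, star_eigenvectorUnitary_mulVec_apply]
  exact sum_congr rfl fun j _ => by ring

theorem eigenvectorBasis_dotProduct_self (j : n) :
    ⇑(hA.eigenvectorBasis j) ⬝ᵥ ⇑(hA.eigenvectorBasis j) = 1 := by
  have h := real_inner_self_eq_norm_sq (hA.eigenvectorBasis j)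
  rwa [EuclideanSpace.inner_eq_star_dotProduct, star_trivial, hA.eigenvectorBasis.orthonormal.1 j,
    one_pow] at h

theorem eigenvectorBasis_dotProduct_mulVec (j : n) (z : n → ℝ) :
    ⇑(hA.eigenvectorBasis j) ⬝ᵥ (A *ᵥ z) = hA.eigenvalues j * (⇑(hA.eigenvectorBasis j) ⬝ᵥ z) := by
  rw [dotProduct_mulVec, ← mulVec_transpose, ← conjTranspose_eq_transpose_of_trivial, hA.eq,
    mulVec_eigenvectorBasis, smul_dotProduct, smul_eq_mul]

theorem eigenvalues_le_one (h : (1 - A).PosSemidef) (j : n) : hA.eigenvalues j ≤ 1 := by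
  have := h.dotProduct_mulVec_nonneg (hA.eigenvectorBasis j)
  rw [star_trivial, sub_mulVec, one_mulVec, dotProduct_sub, eigenvectorBasis_dotProduct_mulVec,
    eigenvectorBasis_dotProduct_self] at this
  linarith

theorem neg_one_lt_eigenvalues (h : (1 + A).PosDef) (j : n) : -1 < hA.eigenvalues j := by
  have hb : ⇑(hA.eigenvectorBasis j) ≠ 0 := fun h0 => by
    simpa [h0] using hA.eigenvectorBasis_dotProduct_self j
  have := h.dotProduct_mulVec_pos hb
  rw [star_trivial, add_mulVec, one_mulVec, dotProduct_add, eigenvectorBasis_dotProduct_mulVec,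
    eigenvectorBasis_dotProduct_self] at this
  linarith

theorem hasSum_dotProduct_pow_mulVec (hμ : ∀ j, -1 < hA.eigenvalues j ∧ hA.eigenvalues j ≤ 1)
    {x z : n → ℝ} (hxz : (1 - A) *ᵥ z = x) :
    HasSum (fun i => x ⬝ᵥ (A ^ i *ᵥ x)) (x ⬝ᵥ z) := by
  have hc : ∀ j, ⇑(hA.eigenvectorBasis j) ⬝ᵥ x =
      (1 - hA.eigenvalues j) * (⇑(hA.eigenvectorBasis j) ⬝ᵥ z) := fun j => by
    rw [← hxz, sub_mulVec, one_mulVec, dotProduct_sub, eigenvectorBasis_dotProduct_mulVec]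
    ring
  simp_rw [hA.dotProduct_pow_mulVec]
  convert hasSum_sum fun j _ => hasSum_pow_mul_mul_self (hμ j).1 (hμ j).2 (hc j) using 1
  simpa using hA.dotProduct_pow_mulVec 0 x z

end Matrix.IsHermitian

namespace SimpleGraph

theorem Preconnected.colorable_two_of_forall_adj_eq_neg {V R : Type*} [Field R] [LinearOrder R]
    [IsStrictOrderedRing R] {G : SimpleGraph V} (hG : G.Preconnected) {x : V → R}
    (hx : ∀ i j, G.Adj i j → x i = -x j) (hx0 : x ≠ 0) : G.Colorable 2 := by
  have habs : ∀ i j, G.Reachable i j → |x i| = |x j| := by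
    rintro i j ⟨w⟩
    induction w with
    | nil => rfl
    | cons h _ ih => rw [← ih, hx _ _ h, abs_neg]
  obtain ⟨k, hk⟩ := Function.ne_iff.1 hx0
  have hne : ∀ i, x i ≠ 0 := fun i => by
    simpa [← abs_pos, habs i k (hG i k)] using hk
  refine (Coloring.mk (fun i => decide (0 < x i)) fun {i j} h => ?_).colorable
  rcases (hne j).lt_or_gt with hj | hj <;> simp [hx i j h, hj, hj.le]

variable {V : Type*} [Fintype V] [DecidableEq V] (G : SimpleGraph V) [DecidableRel G.Adj]

def signlessLapMatrix (R : Type*) [AddMonoidWithOne R] : Matrix V V R :=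
  G.degMatrix R + G.adjMatrix R

theorem dotProduct_mulVec_signlessLapMatrix {R : Type*} [Field R] [CharZero R] (x : V → R) :
    x ⬝ᵥ (G.signlessLapMatrix R *ᵥ x) =
      (∑ i : V, ∑ j : V, if G.Adj i j then (x i + x j) ^ 2 else 0) / 2 := by
  simp_rw [signlessLapMatrix, add_mulVec, dotProduct_add, dotProduct_mulVec_degMatrix,
    dotProduct_mulVec_adjMatrix, ← sum_add_distrib, degree_eq_sum_if_adj, sum_mul, ite_mul,
    one_mul, zero_mul, ← sum_add_distrib, ite_add_ite, add_zero]
  rw [← add_self_div_two (∑ i : V, ∑ j : V, _)]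
  conv_lhs => enter [1, 2, 2, i, 2, j]; rw [if_congr (adj_comm G i j) rfl rfl]
  conv_lhs => enter [1, 2]; rw [Finset.sum_comm]
  simp_rw [← sum_add_distrib, ite_add_ite]
  congr 2 with i
  congr 2 with j
  ring_nf

theorem posSemidef_signlessLapMatrix (R : Type*) [Field R] [LinearOrder R] [IsStrictOrderedRing R]
    [StarRing R] [TrivialStar R] : (G.signlessLapMatrix R).PosSemidef := by
  refine .of_dotProduct_mulVec_nonneg ?_ fun x => ?_
  · rw [IsHermitian, conjTranspose_eq_transpose_of_trivial, signlessLapMatrix, transpose_add,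
      (isSymm_degMatrix R G).eq, (isSymm_adjMatrix G).eq]
  · rw [star_trivial, dotProduct_mulVec_signlessLapMatrix]
    positivity

theorem dotProduct_mulVec_signlessLapMatrix_eq_zero_iff {R : Type*} [Field R] [LinearOrder R]
    [IsStrictOrderedRing R] (x : V → R) :
    x ⬝ᵥ (G.signlessLapMatrix R *ᵥ x) = 0 ↔ ∀ i j, G.Adj i j → x i = -x j := by
  simp (disch := intros; positivity) [dotProduct_mulVec_signlessLapMatrix,
    sum_eq_zero_iff_of_nonneg, add_eq_zero_iff_eq_neg]

theorem posDef_signlessLapMatrix (hG : G.Connected) (hbip : ¬ G.Colorable 2) :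
    (G.signlessLapMatrix ℝ).PosDef := by
  refine .of_dotProduct_mulVec_pos (posSemidef_signlessLapMatrix G ℝ).1 fun x hx => ?_
  have hnonneg := (posSemidef_signlessLapMatrix G ℝ).dotProduct_mulVec_nonneg x
  rw [star_trivial] at hnonneg ⊢
  refine hnonneg.lt_of_ne' fun h0 => hbip ?_
  exact hG.preconnected.colorable_two_of_forall_adj_eq_neg
    ((dotProduct_mulVec_signlessLapMatrix_eq_zero_iff G x).1 h0) hx

theorem sum_lapMatrix_mulVec {R : Type*} [CommRing R] (x : V → R) :
    ∑ i, (G.lapMatrix R *ᵥ x) i = 0 := by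
  have h := dotProduct_mulVec (fun _ => (1 : R)) (G.lapMatrix R) x
  rw [← mulVec_transpose, (isSymm_lapMatrix R G).eq, lapMatrix_mulVec_const_eq_zero,
    zero_dotProduct] at h
  simpa only [dotProduct, one_mul] using h

theorem lapMatrix_add_mulVec (x : V → ℝ) :
    (G.lapMatrix ℝ + (Fintype.card V : ℝ)⁻¹ • of fun _ _ => 1) *ᵥ x =
      G.lapMatrix ℝ *ᵥ x + fun _ => (Fintype.card V : ℝ)⁻¹ * ∑ i, x i := by
  rw [add_mulVec, smul_mulVec]
  congr 1
  ext
  simp [mulVec, dotProduct]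

theorem sum_lapMatrix_add_mulVec (x : V → ℝ) :
    ∑ i, ((G.lapMatrix ℝ + (Fintype.card V : ℝ)⁻¹ • of fun _ _ => 1) *ᵥ x) i = ∑ i, x i := by
  rcases isEmpty_or_nonempty V with hV | hV
  · simp
  simp only [lapMatrix_add_mulVec, Pi.add_apply, sum_add_distrib, sum_lapMatrix_mulVec, sum_const,
    card_univ, nsmul_eq_mul, zero_add]
  field_simp

theorem lapMatrix_add_mulVec_of_sum_eq_zero {x : V → ℝ} (hx : ∑ i, x i = 0) :
    (G.lapMatrix ℝ + (Fintype.card V : ℝ)⁻¹ • of fun _ _ => 1) *ᵥ x = G.lapMatrix ℝ *ᵥ x := by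
  rw [lapMatrix_add_mulVec, hx, mul_zero]
  exact add_zero _

theorem isUnit_det_lapMatrix_add (hG : G.Connected) :
    IsUnit (G.lapMatrix ℝ + (Fintype.card V : ℝ)⁻¹ • of fun _ _ => 1).det := by
  refine isUnit_iff_ne_zero.2 fun hdet => ?_
  obtain ⟨t, ht0, ht⟩ := exists_mulVec_eq_zero_iff.2 hdet
  have hsum : ∑ i, t i = 0 := by
    rw [← G.sum_lapMatrix_add_mulVec t, ht, Pi.zero_def, sum_const_zero]
  rw [G.lapMatrix_add_mulVec_of_sum_eq_zero hsum, lapMatrix_mulVec_eq_zero_iff_forall_reachable]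
    at ht
  obtain ⟨k⟩ := hG.nonempty
  have hconst : t = fun _ => t k := funext fun i => ht i k (hG.preconnected i k)
  have hcard : (Fintype.card V : ℝ) ≠ 0 := by exact_mod_cast (Fintype.card_pos_iff.2 ⟨k⟩).ne'
  rw [hconst, sum_const, card_univ, nsmul_eq_mul, mul_eq_zero, or_iff_right hcard] at hsum
  exact ht0 (hconst.trans (funext fun _ => hsum))

theorem lapMatrix_mulVec_inv_mulVec (hG : G.Connected) {y : V → ℝ} (hy : ∑ i, y i = 0) :
    G.lapMatrix ℝ *ᵥ ((G.lapMatrix ℝ + (Fintype.card V : ℝ)⁻¹ • of fun _ _ => 1)⁻¹ *ᵥ y) = y := by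
  set M := G.lapMatrix ℝ + (Fintype.card V : ℝ)⁻¹ • of fun _ _ => 1
  have hMw : M *ᵥ (M⁻¹ *ᵥ y) = y := by
    rw [mulVec_mulVec, mul_nonsing_inv _ (G.isUnit_det_lapMatrix_add hG), one_mulVec]
  have hsum : ∑ i, (M⁻¹ *ᵥ y) i = 0 := by rw [← G.sum_lapMatrix_add_mulVec, hMw, hy]
  rwa [G.lapMatrix_add_mulVec_of_sum_eq_zero hsum] at hMw

noncomputable def invSqrtDegMatrix : Matrix V V ℝ := diagonal fun v => (√(G.degree v : ℝ))⁻¹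

noncomputable def sqrtDegMatrix : Matrix V V ℝ := diagonal fun v => √(G.degree v : ℝ)

theorem nadj_eq : nadj G = G.invSqrtDegMatrix * G.adjMatrix ℝ * G.invSqrtDegMatrix := rfl

theorem conjTranspose_invSqrtDegMatrix : G.invSqrtDegMatrixᴴ = G.invSqrtDegMatrix := by
  rw [invSqrtDegMatrix, conjTranspose_eq_transpose_of_trivial, diagonal_transpose]

theorem isSymm_nadj : (nadj G).IsSymm := by
  rw [nadj_eq, IsSymm, transpose_mul, transpose_mul, ← conjTranspose_eq_transpose_of_trivial,
    conjTranspose_invSqrtDegMatrix, (G.isSymm_adjMatrix).eq, mul_assoc]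

theorem isHermitian_nadj : (nadj G).IsHermitian :=
  isHermitian_iff_isSymm.2 G.isSymm_nadj

theorem invSqrtDegMatrix_mul_sqrtDegMatrix (hdeg : ∀ v, 0 < G.degree v) :
    G.invSqrtDegMatrix * G.sqrtDegMatrix = 1 := by
  rw [invSqrtDegMatrix, sqrtDegMatrix, diagonal_mul_diagonal, ← diagonal_one]
  congr 1 with v
  exact inv_mul_cancel₀ (Real.sqrt_pos.2 (Nat.cast_pos.2 (hdeg v))).ne'

theorem invSqrtDegMatrix_mul_degMatrix_mul_invSqrtDegMatrix (hdeg : ∀ v, 0 < G.degree v) :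
    G.invSqrtDegMatrix * G.degMatrix ℝ * G.invSqrtDegMatrix = 1 := by
  rw [invSqrtDegMatrix, degMatrix, diagonal_mul_diagonal, diagonal_mul_diagonal, ← diagonal_one]
  congr 1 with v
  field_simp [(Real.sqrt_pos.2 (Nat.cast_pos.2 (hdeg v))).ne']
  exact (Real.sq_sqrt (Nat.cast_nonneg _)).symm

theorem one_sub_nadj (hdeg : ∀ v, 0 < G.degree v) :
    1 - nadj G = G.invSqrtDegMatrix * G.lapMatrix ℝ * G.invSqrtDegMatrix := by
  rw [lapMatrix, mul_sub, sub_mul, G.invSqrtDegMatrix_mul_degMatrix_mul_invSqrtDegMatrix hdeg,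
    nadj_eq]

theorem one_add_nadj (hdeg : ∀ v, 0 < G.degree v) :
    1 + nadj G = G.invSqrtDegMatrix * G.signlessLapMatrix ℝ * G.invSqrtDegMatrix := by
  rw [signlessLapMatrix, mul_add, add_mul,
    G.invSqrtDegMatrix_mul_degMatrix_mul_invSqrtDegMatrix hdeg, nadj_eq]

theorem vecMul_invSqrtDegMatrix_injective (hdeg : ∀ v, 0 < G.degree v) :
    Function.Injective G.invSqrtDegMatrix.vecMul := fun x y h => by
  simpa [vecMul_vecMul, G.invSqrtDegMatrix_mul_sqrtDegMatrix hdeg] using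
    congrArg (· ᵥ* G.sqrtDegMatrix) h

theorem eigenvalues_nadj_mem_Ioc (hdeg : ∀ v, 0 < G.degree v) (hG : G.Connected)
    (hbip : ¬ G.Colorable 2) (j : V) :
    -1 < G.isHermitian_nadj.eigenvalues j ∧ G.isHermitian_nadj.eigenvalues j ≤ 1 := by
  refine ⟨G.isHermitian_nadj.neg_one_lt_eigenvalues ?_ j,
    G.isHermitian_nadj.eigenvalues_le_one ?_ j⟩
  · rw [G.one_add_nadj hdeg]
    nth_rewrite 2 [← conjTranspose_invSqrtDegMatrix]
    exact (G.posDef_signlessLapMatrix hG hbip).mul_mul_conjTranspose_same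
      (G.vecMul_invSqrtDegMatrix_injective hdeg)
  · rw [G.one_sub_nadj hdeg]
    nth_rewrite 2 [← conjTranspose_invSqrtDegMatrix]
    exact (posSemidef_lapMatrix ℝ G).mul_mul_conjTranspose_same _

theorem one_sub_nadj_mulVec_sqrtDegMatrix_mulVec (hdeg : ∀ v, 0 < G.degree v) (w : V → ℝ) :
    (1 - nadj G) *ᵥ (G.sqrtDegMatrix *ᵥ w) = G.invSqrtDegMatrix *ᵥ (G.lapMatrix ℝ *ᵥ w) := by
  rw [G.one_sub_nadj hdeg, mulVec_mulVec, mul_assoc, G.invSqrtDegMatrix_mul_sqrtDegMatrix hdeg,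
    mul_one, mulVec_mulVec]

theorem invSqrtDegMatrix_mulVec_dotProduct_sqrtDegMatrix_mulVec (hdeg : ∀ v, 0 < G.degree v)
    (y w : V → ℝ) : (G.invSqrtDegMatrix *ᵥ y) ⬝ᵥ (G.sqrtDegMatrix *ᵥ w) = y ⬝ᵥ w := by
  simp only [invSqrtDegMatrix, sqrtDegMatrix, dotProduct, mulVec_diagonal]
  refine sum_congr rfl fun p _ => ?_
  field_simp [(Real.sqrt_pos.2 (Nat.cast_pos.2 (hdeg p))).ne']

theorem invSqrtDegMatrix_mulVec_single_sub_single (u v : V) :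
    G.invSqrtDegMatrix *ᵥ (Pi.single u 1 - Pi.single v 1) =
      Pi.single u (√(G.degree u : ℝ))⁻¹ - Pi.single v (√(G.degree v : ℝ))⁻¹ := by
  rw [invSqrtDegMatrix, mulVec_sub, diagonal_mulVec_single, diagonal_mulVec_single, mul_one,
    mul_one]

theorem dotProduct_nadj_pow_mulVec (i : ℕ) (u v : V) :
    (G.invSqrtDegMatrix *ᵥ (Pi.single u 1 - Pi.single v 1)) ⬝ᵥ
      (nadj G ^ i *ᵥ (G.invSqrtDegMatrix *ᵥ (Pi.single u 1 - Pi.single v 1))) =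
      (1 / (G.degree u : ℝ)) * (nadj G ^ i) u u + (1 / (G.degree v : ℝ)) * (nadj G ^ i) v v -
        (2 / √((G.degree u : ℝ) * (G.degree v : ℝ))) * (nadj G ^ i) u v := by
  rw [invSqrtDegMatrix_mulVec_single_sub_single,
    (G.isSymm_nadj.pow i).single_sub_single_dotProduct_mulVec, inv_pow, inv_pow,
    Real.sq_sqrt (Nat.cast_nonneg _), Real.sq_sqrt (Nat.cast_nonneg _),
    Real.sqrt_mul (Nat.cast_nonneg _)]
  ring

end SimpleGraph

/-- for a finite simple connected non-bipartite graph (non-bipartite = not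
2-colorable) and vertices `u, v`, the series
`Σ_{i=0}^{∞} ((1/d_u)(Â^i)_{uu} + (1/d_v)(Â^i)_{vv} − (2/√(d_u d_v))(Â^i)_{uv})`
converges and equals the effective resistance `R_{u,v}`. -/
theorem effective_resistance_eq_tsum_adj_powers {V : Type*} [Fintype V] [DecidableEq V]
    (G : SimpleGraph V) [DecidableRel G.Adj]
    (hconn : G.Connected) (hnonbip : ¬ G.Colorable 2) (hcard : 2 ≤ Fintype.card V)
    (u v : V) :
    Summable (fun i : ℕ =>
        (1 / (G.degree u : ℝ)) * (nadj G ^ i) u u +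
        (1 / (G.degree v : ℝ)) * (nadj G ^ i) v v -
        (2 / Real.sqrt ((G.degree u : ℝ) * (G.degree v : ℝ))) * (nadj G ^ i) u v) ∧
      (∑' i : ℕ,
        ((1 / (G.degree u : ℝ)) * (nadj G ^ i) u u +
         (1 / (G.degree v : ℝ)) * (nadj G ^ i) v v -
         (2 / Real.sqrt ((G.degree u : ℝ) * (G.degree v : ℝ))) * (nadj G ^ i) u v)) =
      effRes G u v := by
  have : Nontrivial V := Fintype.one_lt_card_iff_nontrivial.1 hcard
  have hdeg : ∀ w, 0 < G.degree w := fun w => hconn.preconnected.degree_pos_of_nontrivial w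
  have hy : ∑ p, (Pi.single u 1 - Pi.single v 1 : V → ℝ) p = 0 := by simp [sum_sub_distrib]
  obtain ⟨w, hLw, hres⟩ : ∃ w, G.lapMatrix ℝ *ᵥ w = Pi.single u 1 - Pi.single v 1 ∧
      effRes G u v = (Pi.single u 1 - Pi.single v 1) ⬝ᵥ w :=
    ⟨_, G.lapMatrix_mulVec_inv_mulVec hconn hy, rfl⟩
  have hx := G.one_sub_nadj_mulVec_sqrtDegMatrix_mulVec hdeg w
  rw [hLw] at hx
  have hsum := G.isHermitian_nadj.hasSum_dotProduct_pow_mulVec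
    (G.eigenvalues_nadj_mem_Ioc hdeg hconn hnonbip) hx
  rw [G.invSqrtDegMatrix_mulVec_dotProduct_sqrtDegMatrix_mulVec hdeg, ← hres] at hsum
  simp only [G.dotProduct_nadj_pow_mulVec] at hsum
  exact ⟨hsum.summable, hsum.tsum_eq⟩
end
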